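/- For a fair coin, the expected waiting time for any pattern of length k is at least 2^k, with equality if and only if no proper nonempty suffix of the pattern equals a prefix of the pattern (i.e., the pattern has trivial self-overlap). -/

import Mathlib

open MeasureTheory ProbabilityTheory
open scoped ENNReal

/-- The pattern `P` occurs at time `n` (i.e. within the first `n` draws
`x 0, …, x (n-1)`, as the final block of `P.length` consecutive draws). -/
def occursAt {α : Type*} (P : List α) (x : ℕ → α) (n : ℕ) : Prop :=
  P.length ≤ n ∧ ∀ i (h : i < P.length), x (n - P.length + i) = P.get ⟨i, h⟩

/-- The first time at which the pattern `P` occurs (`∞` if it never occurs). -/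
noncomputable def hitTime {α : Type*} (P : List α) (x : ℕ → α) : ℝ≥0∞ :=
  sInf ((fun n : ℕ => (n : ℝ≥0∞)) '' {n | occursAt P x n})

/-- The fair-coin distribution on `Bool` (`true` = heads `H`, `false` = tails `T`). -/
noncomputable def fairCoin : Measure Bool := (PMF.bernoulli (1/2) (by norm_num)).toMeasure

/-!
Renewal argument. Let `T` be the first time `P` occurs and `k = |P|`. For every `m`, the
probability that `P` ends at time `m + k` is `2⁻ᵏ`. Split this event according to `T`: either
`T ≤ m`, an event decided by the first `m` flips and hence independent of the last `k`, or
`T = m + c` with `1 ≤ c ≤ k`, which is possible only if the suffix and prefix of `P` of length `c`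
agree and then leaves `k - c` fresh flips to match. Solving for `P(T > m)` gives
`P(T > m) = ∑_c [overlap c] 2ᶜ P(T = m + c)`, and summing over `m` yields
`E T = R_P(P) · P(T < ∞)`. Since `R_P(P) < ∞`, `T` is almost surely finite and `E T = R_P(P)`,
whose term `c = k` is `2ᵏ` and whose other terms vanish exactly when `P` has no proper overlap.
-/

def window {α : Type*} (x : ℕ → α) (b l : ℕ) : List α := (List.range' b l).map x

section Deterministic

variable {α : Type*} {P : List α} {x y : ℕ → α}

lemma window_add (x : ℕ → α) (b l₁ l₂ : ℕ) :
    window x b (l₁ + l₂) = window x b l₁ ++ window x (b + l₁) l₂ := by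
  simp [window, ← List.range'_append_1]

lemma drop_window (x : ℕ → α) (b l e : ℕ) : (window x b l).drop e = window x (b + e) (l - e) := by
  simp [window, ← List.map_drop, List.drop_range']

lemma window_length_eq_iff {b : ℕ} :
    window x b P.length = P ↔ ∀ i (h : i < P.length), x (b + i) = P[i] := by
  simp [List.ext_getElem_iff, window]

lemma occursAt_iff_window {n : ℕ} :
    occursAt P x n ↔ P.length ≤ n ∧ window x (n - P.length) P.length = P := by
  simp [occursAt, window_length_eq_iff]

lemma occursAt_congr {n : ℕ} (h : ∀ i < n, x i = y i) : occursAt P x n ↔ occursAt P y n := by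
  refine and_congr_right fun hn => forall₂_congr fun i hi => ?_
  rw [h _ (by omega)]

lemma occursAt_add_iff {t c : ℕ} (ht : occursAt P x t) (hc : c ≤ P.length) :
    occursAt P x (t + (P.length - c)) ↔
      P.drop (P.length - c) = P.take c ∧ window x t (P.length - c) = P.drop c := by
  obtain ⟨hkt, hw⟩ := occursAt_iff_window.1 ht
  set k := P.length
  have hdrop : P.drop (k - c) = window x (t - k + (k - c)) c := by
    rw [← hw, drop_window]
    congr 1
    omega
  have hshift : window x (t - k + (k - c)) k = P.drop (k - c) ++ window x t (k - c) := by
    have h := window_add x (t - k + (k - c)) c (k - c)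
    rwa [show t - k + (k - c) + c = t by omega, show c + (k - c) = k by omega, ← hdrop] at h
  rw [occursAt_iff_window, show t + (k - c) - k = t - k + (k - c) by omega, hshift,
    and_iff_right (by omega)]
  conv_lhs => rhs; rw [← List.take_append_drop c P]
  constructor
  · intro h
    exact List.append_inj h (by simp; omega)
  · rintro ⟨h₁, h₂⟩
    rw [h₁, h₂]

lemma hitTime_le_of_occursAt {n : ℕ} (h : occursAt P x n) : hitTime P x ≤ n :=
  sInf_le ⟨n, h, rfl⟩

lemma natCast_le_hitTime_iff {t : ℕ} :
    (t : ℝ≥0∞) ≤ hitTime P x ↔ ∀ s, occursAt P x s → t ≤ s := by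
  simp [hitTime, le_sInf_iff]

lemma hitTime_le_natCast_iff {m : ℕ} : hitTime P x ≤ m ↔ ∃ s ≤ m, occursAt P x s := by
  refine ⟨fun h => ?_, fun ⟨s, hsm, hs⟩ => (hitTime_le_of_occursAt hs).trans (by simpa)⟩
  by_contra! hno
  have : ((m + 1 : ℕ) : ℝ≥0∞) ≤ hitTime P x :=
    natCast_le_hitTime_iff.2 fun s hs => by by_contra! hsm; exact hno s (by omega) hs
  exact absurd (this.trans h) (by exact_mod_cast Nat.not_succ_le_self m)

lemma hitTime_eq_natCast_iff {t : ℕ} :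
    hitTime P x = t ↔ occursAt P x t ∧ ∀ s < t, ¬ occursAt P x s := by
  constructor
  · intro h
    obtain ⟨s, hst, hs⟩ := hitTime_le_natCast_iff.1 h.le
    have hts := natCast_le_hitTime_iff.1 h.ge s hs
    refine ⟨le_antisymm hst hts ▸ hs, fun s' hs' hocc => ?_⟩
    have := natCast_le_hitTime_iff.1 h.ge s' hocc
    omega
  · rintro ⟨ht, hmin⟩
    refine le_antisymm (hitTime_le_of_occursAt ht) (natCast_le_hitTime_iff.2 fun s hs => ?_)
    by_contra! hst
    exact hmin s hst hs

lemma hitTime_eq_top_or_exists_natCast : hitTime P x = ⊤ ∨ ∃ t : ℕ, hitTime P x = t := by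
  classical
  by_cases h : ∃ n, occursAt P x n
  · exact .inr ⟨Nat.find h, hitTime_eq_natCast_iff.2 ⟨Nat.find_spec h, fun s => Nat.find_min h⟩⟩
  · left
    simp_all [hitTime]

lemma length_le_hitTime : (P.length : ℝ≥0∞) ≤ hitTime P x :=
  natCast_le_hitTime_iff.2 fun _ hs => hs.1

lemma hitTime_le_natCast_congr {m : ℕ} (h : ∀ i < m, x i = y i) :
    hitTime P x ≤ m ↔ hitTime P y ≤ m := by
  simp only [hitTime_le_natCast_iff]
  exact exists_congr fun s => and_congr_right fun hs =>
    occursAt_congr fun i hi => h i (by omega)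

lemma hitTime_eq_natCast_congr {t : ℕ} (h : ∀ i < t, x i = y i) :
    hitTime P x = t ↔ hitTime P y = t := by
  simp only [hitTime_eq_natCast_iff]
  refine and_congr (occursAt_congr h) (forall₂_congr fun s hs => ?_)
  rw [occursAt_congr fun i hi => h i (by omega)]

lemma hitTime_eq_tsum (P : List α) (x : ℕ → α) :
    hitTime P x = ∑' m : ℕ, if (m : ℝ≥0∞) < hitTime P x then 1 else 0 := by
  rcases hitTime_eq_top_or_exists_natCast (P := P) (x := x) with h | ⟨t, h⟩
  · simp [h]
  · rw [h, tsum_eq_sum (s := Finset.range t) (fun m hm => by simpa using hm)]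
    simp [Finset.sum_boole, Finset.filter_true_of_mem]

lemma exists_hitTime_eq_of_occursAt {m : ℕ}
    (h : occursAt P x (m + P.length)) (hm : ¬ hitTime P x ≤ m) :
    ∃ c ∈ Finset.Icc 1 P.length, hitTime P x = (m + c : ℕ) := by
  have hle := hitTime_le_of_occursAt h
  rcases hitTime_eq_top_or_exists_natCast (P := P) (x := x) with ht | ⟨t, ht⟩
  · simp [ht] at hle
  · rw [ht, Nat.cast_le] at hle hm
    exact ⟨t - m, Finset.mem_Icc.2 ⟨by omega, by omega⟩, by rw [ht]; congr 1; omega⟩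

end Deterministic

/-- Conway's correlation `R_P(P)` of `P` with itself, for fair coin flips. -/
noncomputable def autocorrelation (P : List Bool) : ℝ≥0∞ :=
  ∑ c ∈ Finset.Icc 1 P.length, if P.drop (P.length - c) = P.take c then 2 ^ c else 0

lemma autocorrelation_ne_top (P : List Bool) : autocorrelation P ≠ ⊤ :=
  ENNReal.sum_ne_top.2 fun _ _ => by split_ifs <;> simp

lemma autocorrelation_eq_two_pow_add {P : List Bool} (hP : 1 ≤ P.length) :
    autocorrelation P = 2 ^ P.length + ∑ c ∈ Finset.Ico 1 P.length,
      if P.drop (P.length - c) = P.take c then 2 ^ c else 0 := by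
  rw [autocorrelation, ← Finset.Ico_insert_right hP, Finset.sum_insert (by simp)]
  simp

lemma two_pow_le_autocorrelation {P : List Bool} (hP : 1 ≤ P.length) :
    2 ^ P.length ≤ autocorrelation P := by
  rw [autocorrelation_eq_two_pow_add hP]
  exact le_self_add

lemma autocorrelation_eq_two_pow_iff {P : List Bool} (hP : 1 ≤ P.length) :
    autocorrelation P = 2 ^ P.length ↔
      ∀ m, 0 < m → m < P.length → P.drop (P.length - m) ≠ P.take m := by
  rw [autocorrelation_eq_two_pow_add hP]
  conv_lhs => rhs; rw [← add_zero (2 ^ P.length)]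
  rw [ENNReal.add_right_inj (by simp), Finset.sum_eq_zero_iff]
  simp [Nat.one_le_iff_ne_zero, Nat.pos_iff_ne_zero]

lemma ENNReal.two_pow_mul_inv_two_pow_sub {c k : ℕ} (h : c ≤ k) :
    (2 : ℝ≥0∞) ^ k * 2⁻¹ ^ (k - c) = 2 ^ c := by
  obtain ⟨d, rfl⟩ := Nat.exists_eq_add_of_le h
  rw [Nat.add_sub_cancel_left, ← ENNReal.inv_pow, pow_add, mul_assoc,
    ENNReal.mul_inv_cancel (by simp) (by simp), mul_one]

section FairCoins

variable {Ω : Type*} [MeasurableSpace Ω] {μ : Measure Ω} {X : ℕ → Ω → Bool}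

lemma measure_preimage_singleton_of_map_eq_fairCoin {Y : Ω → Bool} (hY : Measurable Y)
    (hfair : μ.map Y = fairCoin) (b : Bool) : μ (Y ⁻¹' {b}) = 2⁻¹ := by
  rw [← Measure.map_apply hY (measurableSet_singleton b), hfair, fairCoin,
    PMF.toMeasure_apply_singleton _ _ (measurableSet_singleton b)]
  cases b <;> simp [PMF.bernoulli, ENNReal.one_sub_inv_two]

lemma measure_window_eq (hmeas : ∀ n, Measurable (X n)) (hindep : iIndepFun X μ)
    (hfair : ∀ n, μ.map (X n) = fairCoin) (b : ℕ) (w : List Bool) :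
    μ {ω | window (X · ω) b w.length = w} = 2⁻¹ ^ w.length := by
  have hset : {ω | window (X · ω) b w.length = w} =
      ⋂ i ∈ Finset.range w.length, X (b + i) ⁻¹' {w.getD i false} := by
    ext ω
    simp +contextual [window_length_eq_iff]
  rw [hset, (hindep.precomp (add_right_injective b)).measure_inter_preimage_eq_mul _
    fun _ _ => measurableSet_singleton _]
  simp [measure_preimage_singleton_of_map_eq_fairCoin (hmeas _) (hfair _)]

lemma measure_inter_window_eq (hmeas : ∀ n, Measurable (X n)) (hindep : iIndepFun X μ)
    (hfair : ∀ n, μ.map (X n) = fairCoin) {b : ℕ} {E : Set Ω}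
    (hE : ∀ ω ω', (∀ i < b, X i ω = X i ω') → (ω ∈ E ↔ ω' ∈ E)) (w : List Bool) :
    μ (E ∩ {ω | window (X · ω) b w.length = w}) = μ E * 2⁻¹ ^ w.length := by
  let past := fun ω (i : Finset.range b) => X i ω
  let future := fun ω (j : Finset.Ico b (b + w.length)) => X j ω
  have hindep' : IndepFun past future μ :=
    hindep.indepFun_finset _ _
      (Finset.disjoint_left.2 fun i hi hi' => by simp at hi hi'; omega) hmeas
  -- `E` is a preimage under `past`, whose codomain is finite, so `E` is automatically measurable.
  have hE' : E = past ⁻¹' (past '' E) := by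
    refine (Set.subset_preimage_image _ _).antisymm ?_
    rintro ω ⟨ω', hω', heq⟩
    exact (hE ω' ω (fun i hi => congrFun heq ⟨i, by simpa using hi⟩)).1 hω'
  have hw : {ω | window (X · ω) b w.length = w} =
      future ⁻¹' {v | ∀ j, v j = w.getD (j - b) false} := by
    ext ω
    simp only [window_length_eq_iff, Set.mem_ofPred_eq, Set.mem_preimage, Subtype.forall,
      Finset.mem_Ico, future]
    constructor
    · rintro h j ⟨hbj, hj⟩
      rw [show j = b + (j - b) by omega, h _ (by omega), Nat.add_sub_cancel_left,
        List.getD_eq_getElem]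
    · intro h i hi
      rw [h (b + i) ⟨by omega, by omega⟩, Nat.add_sub_cancel_left, List.getD_eq_getElem]
  rw [hE', hw, hindep'.measure_inter_preimage_eq_mul _ _ (Set.toFinite _).measurableSet
    (Set.toFinite _).measurableSet, ← hE', ← hw, measure_window_eq hmeas hindep hfair]

end FairCoins

section Measurability

variable {Ω : Type*} [MeasurableSpace Ω] {μ : Measure Ω} {X : ℕ → Ω → Bool} {P : List Bool}

lemma measurableSet_occursAt (hmeas : ∀ n, Measurable (X n)) (n : ℕ) :
    MeasurableSet {ω | occursAt P (X · ω) n} := by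
  simp only [occursAt, Set.ofPred_and, Set.ofPred_forall]
  exact .inter (.const _) (.iInter fun i => .iInter fun _ => hmeas _ (measurableSet_singleton _))

lemma measurableSet_hitTime_le (hmeas : ∀ n, Measurable (X n)) (m : ℕ) :
    MeasurableSet {ω | hitTime P (X · ω) ≤ m} := by
  simp only [hitTime_le_natCast_iff, Set.ofPred_exists, Set.ofPred_and]
  exact .iUnion fun s => .inter (.const _) (measurableSet_occursAt hmeas s)

lemma measurable_hitTime (hmeas : ∀ n, Measurable (X n)) :
    Measurable fun ω => hitTime P (X · ω) := by
  rw [funext fun ω => hitTime_eq_tsum P (X · ω)]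
  refine Measurable.tsum fun m => Measurable.ite ?_ measurable_const measurable_const
  simpa only [Set.compl_ofPred, not_le] using (measurableSet_hitTime_le (P := P) hmeas m).compl

lemma lintegral_hitTime_eq_tsum (hmeas : ∀ n, Measurable (X n)) :
    ∫⁻ ω, hitTime P (X · ω) ∂μ = ∑' m : ℕ, μ {ω | (m : ℝ≥0∞) < hitTime P (X · ω)} := by
  have hlt (m : ℕ) : MeasurableSet {ω | (m : ℝ≥0∞) < hitTime P (X · ω)} :=
    measurableSet_lt measurable_const (measurable_hitTime hmeas)
  rw [funext fun ω => hitTime_eq_tsum P (X · ω),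
    lintegral_tsum fun m => (Measurable.ite (hlt m) measurable_const measurable_const).aemeasurable]
  exact tsum_congr fun m => by
    simpa only [Set.indicator_apply, Set.mem_ofPred_eq, Pi.one_apply] using
      lintegral_indicator_one (hlt m)

end Measurability

section Renewal

variable {Ω : Type*} [MeasurableSpace Ω] {μ : Measure Ω} {X : ℕ → Ω → Bool} {P : List Bool}

lemma measure_hitTime_le_inter_occursAt (hmeas : ∀ n, Measurable (X n)) (hindep : iIndepFun X μ)
    (hfair : ∀ n, μ.map (X n) = fairCoin) (m : ℕ) :
    μ ({ω | hitTime P (X · ω) ≤ m} ∩ {ω | occursAt P (X · ω) (m + P.length)}) =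
      μ {ω | hitTime P (X · ω) ≤ m} * 2⁻¹ ^ P.length := by
  simp only [occursAt_iff_window, Nat.add_sub_cancel, le_add_iff_nonneg_left, zero_le, true_and]
  exact measure_inter_window_eq hmeas hindep hfair
    (fun ω ω' h => hitTime_le_natCast_congr h) P

lemma measure_hitTime_eq_inter_occursAt (hmeas : ∀ n, Measurable (X n))
    (hindep : iIndepFun X μ) (hfair : ∀ n, μ.map (X n) = fairCoin) (t : ℕ) {c : ℕ}
    (hc : c ≤ P.length) :
    μ ({ω | hitTime P (X · ω) = t} ∩ {ω | occursAt P (X · ω) (t + (P.length - c))}) =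
      if P.drop (P.length - c) = P.take c then
        μ {ω | hitTime P (X · ω) = t} * 2⁻¹ ^ (P.length - c) else 0 := by
  have hset : {ω | hitTime P (X · ω) = t} ∩ {ω | occursAt P (X · ω) (t + (P.length - c))} =
      {ω | hitTime P (X · ω) = t} ∩ {ω | P.drop (P.length - c) = P.take c ∧
        window (X · ω) t (P.drop c).length = P.drop c} := by
    ext ω
    simp only [Set.mem_inter_iff, Set.mem_ofPred_eq, List.length_drop, and_congr_right_iff]
    exact fun ht => occursAt_add_iff (hitTime_eq_natCast_iff.1 ht).1 hc
  split_ifs with hov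
  · simpa [hset, hov] using measure_inter_window_eq hmeas hindep hfair
      (E := {ω | hitTime P (X · ω) = t}) (fun ω ω' h => hitTime_eq_natCast_congr h) (P.drop c)
  · simp [hset, hov]

lemma measure_occursAt_eq_add_sum (hmeas : ∀ n, Measurable (X n)) (hindep : iIndepFun X μ)
    (hfair : ∀ n, μ.map (X n) = fairCoin) (m : ℕ) :
    μ {ω | occursAt P (X · ω) (m + P.length)} =
      μ {ω | hitTime P (X · ω) ≤ m} * 2⁻¹ ^ P.length + ∑ c ∈ Finset.Icc 1 P.length,
        if P.drop (P.length - c) = P.take c then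
          μ {ω | hitTime P (X · ω) = (m + c : ℕ)} * 2⁻¹ ^ (P.length - c) else 0 := by
  set A := {ω | occursAt P (X · ω) (m + P.length)}
  have hdiff : A \ {ω | hitTime P (X · ω) ≤ m} =
      ⋃ c ∈ Finset.Icc 1 P.length, {ω | hitTime P (X · ω) = (m + c : ℕ)} ∩ A := by
    ext ω
    simp only [A, Set.mem_sdiff, Set.mem_iUnion, Set.mem_inter_iff, Set.mem_ofPred_eq,
      exists_prop]
    constructor
    · rintro ⟨hA, hm⟩
      obtain ⟨c, hc, ht⟩ := exists_hitTime_eq_of_occursAt hA hm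
      exact ⟨c, hc, ht, hA⟩
    · rintro ⟨c, hc, ht, hA⟩
      rw [ht, Nat.cast_le, Finset.mem_Icc] at *
      exact ⟨hA, by omega⟩
  rw [← measure_inter_add_sdiff A (measurableSet_hitTime_le hmeas m), Set.inter_comm,
    measure_hitTime_le_inter_occursAt hmeas hindep hfair, hdiff, measure_biUnion_finset]
  · refine congrArg _ (Finset.sum_congr rfl fun c hc => ?_)
    rw [Finset.mem_Icc] at hc
    simp only [A, show m + P.length = m + c + (P.length - c) by omega]
    exact measure_hitTime_eq_inter_occursAt hmeas hindep hfair _ hc.2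
  · intro c _ c' _ hcc'
    refine Set.disjoint_left.2 fun ω h h' => hcc' ?_
    simpa using h.1.symm.trans h'.1
  · exact fun c _ => ((measurable_hitTime hmeas) (measurableSet_singleton _)).inter
      (measurableSet_occursAt hmeas _)

lemma measure_natCast_lt_hitTime_eq_sum [IsProbabilityMeasure μ] (hmeas : ∀ n, Measurable (X n))
    (hindep : iIndepFun X μ) (hfair : ∀ n, μ.map (X n) = fairCoin) (m : ℕ) :
    μ {ω | (m : ℝ≥0∞) < hitTime P (X · ω)} =
      ∑ c ∈ Finset.Icc 1 P.length, (if P.drop (P.length - c) = P.take c then 2 ^ c else 0) *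
        μ {ω | hitTime P (X · ω) = (m + c : ℕ)} := by
  have hone : (2 : ℝ≥0∞) ^ P.length * 2⁻¹ ^ P.length = 1 := by
    simpa using ENNReal.two_pow_mul_inv_two_pow_sub (Nat.zero_le P.length)
  refine (ENNReal.add_right_inj (measure_ne_top μ {ω | hitTime P (X · ω) ≤ m})).1 ?_
  calc _ = 1 := by
        simpa only [Set.compl_ofPred, not_le] using
          prob_add_prob_compl (μ := μ) (measurableSet_hitTime_le hmeas m)
    _ = 2 ^ P.length * μ {ω | occursAt P (X · ω) (m + P.length)} := by
        simp only [occursAt_iff_window, le_add_iff_nonneg_left, zero_le, true_and,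
          Nat.add_sub_cancel, measure_window_eq hmeas hindep hfair, hone]
    _ = _ := by
        rw [measure_occursAt_eq_add_sum hmeas hindep hfair, mul_add, Finset.mul_sum,
          mul_left_comm, hone, mul_one]
        refine congrArg _ (Finset.sum_congr rfl fun c hc => ?_)
        split_ifs
        · rw [mul_left_comm, ENNReal.two_pow_mul_inv_two_pow_sub (Finset.mem_Icc.1 hc).2,
            mul_comm]
        · simp

end Renewal

section Expectation

variable {Ω : Type*} [MeasurableSpace Ω] {μ : Measure Ω} {X : ℕ → Ω → Bool} {P : List Bool}

lemma tsum_measure_hitTime_eq_natCast_add (hmeas : ∀ n, Measurable (X n)) {c : ℕ}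
    (hc : c ≤ P.length) :
    ∑' m : ℕ, μ {ω | hitTime P (X · ω) = (m + c : ℕ)} = μ {ω | hitTime P (X · ω) ≠ ⊤} := by
  have hunion : {ω | hitTime P (X · ω) ≠ ⊤} = ⋃ m : ℕ, {ω | hitTime P (X · ω) = (m + c : ℕ)} := by
    ext ω
    simp only [Set.mem_ofPred_eq, Set.mem_iUnion]
    constructor
    · intro hne
      obtain ⟨t, ht⟩ := hitTime_eq_top_or_exists_natCast.resolve_left hne
      have hkt : P.length ≤ t := by exact_mod_cast ht ▸ length_le_hitTime (P := P)
      exact ⟨t - c, by rw [ht, Nat.sub_add_cancel (hc.trans hkt)]⟩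
    · rintro ⟨m, hm⟩
      simp [hm]
  rw [hunion, measure_iUnion (fun m m' hmm' => ?_) fun m => ?_]
  · refine Set.disjoint_left.2 fun ω h h' => hmm' ?_
    have := h.symm.trans h'
    simp only [Nat.cast_inj] at this
    omega
  · exact measurable_hitTime hmeas (measurableSet_singleton _)

lemma lintegral_hitTime_eq_autocorrelation_mul [IsProbabilityMeasure μ]
    (hmeas : ∀ n, Measurable (X n)) (hindep : iIndepFun X μ)
    (hfair : ∀ n, μ.map (X n) = fairCoin) :
    ∫⁻ ω, hitTime P (X · ω) ∂μ = autocorrelation P * μ {ω | hitTime P (X · ω) ≠ ⊤} := by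
  rw [lintegral_hitTime_eq_tsum hmeas,
    tsum_congr fun m => measure_natCast_lt_hitTime_eq_sum hmeas hindep hfair m,
    Summable.tsum_finsetSum fun _ _ => ENNReal.summable, autocorrelation, Finset.sum_mul]
  refine Finset.sum_congr rfl fun c hc => ?_
  rw [ENNReal.tsum_mul_left, tsum_measure_hitTime_eq_natCast_add hmeas (Finset.mem_Icc.1 hc).2]

theorem lintegral_hitTime_eq_autocorrelation [IsProbabilityMeasure μ]
    (hmeas : ∀ n, Measurable (X n)) (hindep : iIndepFun X μ)
    (hfair : ∀ n, μ.map (X n) = fairCoin) :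
    ∫⁻ ω, hitTime P (X · ω) ∂μ = autocorrelation P := by
  have hmul := lintegral_hitTime_eq_autocorrelation_mul (P := P) hmeas hindep hfair
  have hfin : ∫⁻ ω, hitTime P (X · ω) ∂μ ≠ ⊤ := by
    rw [hmul]
    exact ENNReal.mul_ne_top (autocorrelation_ne_top P) (measure_ne_top _ _)
  have hae : μ {ω | hitTime P (X · ω) ≠ ⊤} = 1 := by
    have hmeas_ne : MeasurableSet {ω | hitTime P (X · ω) ≠ ⊤} :=
      (measurable_hitTime hmeas (measurableSet_singleton ⊤)).compl
    rw [← prob_compl_eq_zero_iff hmeas_ne]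
    simpa [ae_iff, Set.compl_ofPred] using ae_lt_top (measurable_hitTime hmeas) hfin
  rw [hmul, hae, mul_one]

end Expectation

/-- For a fair coin, the expected waiting time for any pattern of length k ≥ 1 is at least
2^k, with equality iff no proper nonempty suffix of the pattern equals a prefix of it. -/
theorem stmt_17 {Ω : Type*} [MeasurableSpace Ω] (μ : Measure Ω) [IsProbabilityMeasure μ]
    (X : ℕ → Ω → Bool) (hmeas : ∀ n, Measurable (X n))
    (hindep : iIndepFun X μ)
    (hfair : ∀ n, μ.map (X n) = fairCoin)
    (P : List Bool) (hP : 1 ≤ P.length) :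
    (2 : ℝ≥0∞) ^ P.length ≤ ∫⁻ ω, hitTime P (fun n => X n ω) ∂μ ∧
    ((∫⁻ ω, hitTime P (fun n => X n ω) ∂μ = (2 : ℝ≥0∞) ^ P.length) ↔
      ∀ m, 0 < m → m < P.length → P.drop (P.length - m) ≠ P.take m) := by
  rw [lintegral_hitTime_eq_autocorrelation hmeas hindep hfair]
  exact ⟨two_pow_le_autocorrelation hP, autocorrelation_eq_two_pow_iff hP⟩
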